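/- For any ADSAGA state, E[φ1⁺ + φ2⁺] − (φ1 + φ2) ≤ −2·p_min·η²·‖v‖² − (2·η·m·p_min/n)·⟨y, Σ_{i=1}^n ∇f_i(x)⟩ + η²·p_min·(4·m·L_f·η + 4)·Σ_j ‖u_j‖² + (16·m·p_min·η²/n)·Σ_j ‖g*_j‖² + (16·m·p_min·η²/n)·Σ_j ‖β*_j‖² + (η²·m·p_min/n)·(4·m·η·L_f + 16)·Σ_i ‖α*_i‖² + (8·m·p_min·η²/n)·Σ_i ‖∇f_i(x) − ∇f_i(x*)‖², where the superscript ⁺ denotes the value at the state produced by one step with choice (j, i). -/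

import Mathlib

open Finset
open scoped RealInnerProductSpace BigOperators

noncomputable section

/-- The state of the ADSAGA algorithm. -/
structure AdsagaState (d n m : ℕ) where
  x : EuclideanSpace ℝ (Fin d)
  u : Fin m → EuclideanSpace ℝ (Fin d)
  g : Fin m → EuclideanSpace ℝ (Fin d)
  beta : Fin m → EuclideanSpace ℝ (Fin d)
  alpha : Fin n → EuclideanSpace ℝ (Fin d)
  idx : Fin m → Fin n

namespace AdsagaState

variable {d n m : ℕ}

/-- `h_j = g_j - β_j`. -/
def hvec (S : AdsagaState d n m) (j : Fin m) : EuclideanSpace ℝ (Fin d) :=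
  S.g j - S.beta j

/-- `ᾱ = (1/n) ∑ i, α_i`. -/
def abar (S : AdsagaState d n m) : EuclideanSpace ℝ (Fin d) :=
  ((1 : ℝ) / n) • ∑ i, S.alpha i

/-- `v = ∑ j, u_j + m • ᾱ`. -/
def v (S : AdsagaState d n m) : EuclideanSpace ℝ (Fin d) :=
  (∑ j, S.u j) + (m : ℝ) • S.abar

/-- One ADSAGA step with choice `(j, i)` (where `i` is meant to lie in `S_j`). -/
def step (gradf : Fin n → EuclideanSpace ℝ (Fin d) → EuclideanSpace ℝ (Fin d))
    (p : Fin m → ℝ) (pmin η : ℝ) (S : AdsagaState d n m) (j : Fin m) (i : Fin n) :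
    AdsagaState d n m where
  x := S.x - (η * pmin / p j) • (S.u j + S.abar)
  alpha := Function.update S.alpha (S.idx j) (S.g j)
  g := Function.update S.g j (gradf i S.x)
  beta := Function.update S.beta j (if i = S.idx j then S.g j else S.alpha i)
  u := Function.update S.u j
    ((1 - pmin / p j) • S.u j
      + (pmin / p j) • (gradf i S.x - (if i = S.idx j then S.g j else S.alpha i))
      - ((m : ℝ) / n * (1 - pmin / p j)) • S.hvec j)
  idx := Function.update S.idx j i

/-- Run `k` ADSAGA steps, with the `t`-th choice given by the index `ω t` (on machine `J (ω t)`). -/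
def run (gradf : Fin n → EuclideanSpace ℝ (Fin d) → EuclideanSpace ℝ (Fin d))
    (p : Fin m → ℝ) (pmin η : ℝ) (J : Fin n → Fin m) (S0 : AdsagaState d n m) :
    (k : ℕ) → (Fin k → Fin n) → AdsagaState d n m
  | 0, _ => S0
  | (k + 1), ω =>
      step gradf p pmin η (run gradf p pmin η J S0 k (fun t => ω t.castSucc))
        (J (ω (Fin.last k))) (ω (Fin.last k))

end AdsagaState

/-- `φ1 = 4mη (f(x) - f(x^*))` where `f` is the average of the `f_i`. -/
def phi1 (f : Fin n → EuclideanSpace ℝ (Fin d) → ℝ) (xstar : EuclideanSpace ℝ (Fin d))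
    {m : ℕ} (η : ℝ) (S : AdsagaState d n m) : ℝ :=
  4 * (m : ℝ) * η * ((((1 : ℝ) / n) * ∑ i, f i S.x) - (((1 : ℝ) / n) * ∑ i, f i xstar))

/-- `φ2 = ‖y‖² - 2η⟪y, v⟫ + 2η²‖v‖²`. -/
def phi2 (xstar : EuclideanSpace ℝ (Fin d)) {n m : ℕ} (η : ℝ) (S : AdsagaState d n m) : ℝ :=
  ‖S.x - xstar‖ ^ 2 - 2 * η * ⟪S.x - xstar, S.v⟫ + 2 * η ^ 2 * ‖S.v‖ ^ 2

/-- `φ3 = η² c3 ∑ j, (pmin / p j) ‖g*_j‖²`. -/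
def phi3 (gradf : Fin n → EuclideanSpace ℝ (Fin d) → EuclideanSpace ℝ (Fin d))
    (xstar : EuclideanSpace ℝ (Fin d)) {m : ℕ} (p : Fin m → ℝ) (pmin η c3 : ℝ)
    (S : AdsagaState d n m) : ℝ :=
  η ^ 2 * c3 * ∑ j, (pmin / p j) * ‖S.g j - gradf (S.idx j) xstar‖ ^ 2

/-- `φ4 = η² c4 (2 ∑ i, (pmin / p (J i)) ‖α*_i‖² - ∑ j, (pmin / p j) ‖β*_j‖²)`. -/
def phi4 (gradf : Fin n → EuclideanSpace ℝ (Fin d) → EuclideanSpace ℝ (Fin d))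
    (xstar : EuclideanSpace ℝ (Fin d)) {m : ℕ} (J : Fin n → Fin m) (p : Fin m → ℝ)
    (pmin η c4 : ℝ) (S : AdsagaState d n m) : ℝ :=
  η ^ 2 * c4 * ((2 * ∑ i, (pmin / p (J i)) * ‖S.alpha i - gradf i xstar‖ ^ 2)
    - ∑ j, (pmin / p j) * ‖S.beta j - gradf (S.idx j) xstar‖ ^ 2)

/-- `φ5 = η² c5 ∑ j, ‖u_j‖²`. -/
def phi5 {d n m : ℕ} (η c5 : ℝ) (S : AdsagaState d n m) : ℝ :=
  η ^ 2 * c5 * ∑ j, ‖S.u j‖ ^ 2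

/-- The total potential `φ = φ1 + φ2 + φ3 + φ4 + φ5`. -/
def phiTot (f : Fin n → EuclideanSpace ℝ (Fin d) → ℝ)
    (gradf : Fin n → EuclideanSpace ℝ (Fin d) → EuclideanSpace ℝ (Fin d))
    (xstar : EuclideanSpace ℝ (Fin d)) {m : ℕ} (J : Fin n → Fin m) (p : Fin m → ℝ)
    (pmin η c3 c4 c5 : ℝ) (S : AdsagaState d n m) : ℝ :=
  phi1 f xstar η S + phi2 xstar η S + phi3 gradf xstar p pmin η c3 S
    + phi4 gradf xstar J p pmin η c4 S + phi5 η c5 S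

end

/-
A step with choice `(j, i)` moves `x` by `-η q_j a_j` and `v` by `q_j w`, where `q_j = p_min / p_j`,
`a_j = u_j + ᾱ` and `w = ∇f_i(x) - β⁺_j - u_j + (m/n) h_j`. By the descent lemma for the
`L_f`-smooth average `f`, the change of `φ1 + φ2` is at most `q_j` times a linear form in `(a_j, w)`
plus `η² q_j² (2c‖a_j‖² + ‖a_j + w‖² + ‖w‖²)` with `c = m L_f η`. Weighting by `p_j` removes `q_j`
from the linear part, which then averages to `-2 η² ‖v‖² - (2 η m / n) ⟪y, Σ ∇f_i(x)⟫`: the `a_j`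
average to `v` and `w` averages to `(m/n) Σ ∇f_i(x) - v`. The quadratic remainder is bounded
machine by machine after dropping `q_j ≤ 1`: on `S_j` the vectors `w + u_j` sum to
`Σ_{i ∈ S_j} (∇f_i(x) - α_i)`, so the cross terms are controlled by Young's inequality, and `i_j` is
the only index of `S_j` whose stored gradient is not `α_i`.
-/

theorem norm_sum_sq_le_card_mul {V ι : Type*} [SeminormedAddCommGroup V] (s : Finset ι)
    (f : ι → V) : ‖∑ i ∈ s, f i‖ ^ 2 ≤ #s * ∑ i ∈ s, ‖f i‖ ^ 2 :=
  (pow_le_pow_left₀ (norm_nonneg _) (norm_sum_le s f) 2).trans sq_sum_le_card_mul_sum_sq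

section InnerProductSpace

variable {V : Type*} [NormedAddCommGroup V] [InnerProductSpace ℝ V]

theorem two_mul_inner_le_of_mul_eq_one {a b : ℝ} (ha : 0 < a) (hab : a * b = 1) (x y : V) :
    2 * ⟪x, y⟫ ≤ a * ‖x‖ ^ 2 + b * ‖y‖ ^ 2 := by
  have hb : 0 ≤ b := by nlinarith
  have key : 0 ≤ b * ‖a • x - y‖ ^ 2 := by positivity
  rw [norm_sub_sq_real, real_inner_smul_left, norm_smul, Real.norm_of_nonneg ha.le] at key
  linear_combination key + (a * ‖x‖ ^ 2 - 2 * ⟪x, y⟫) * hab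

theorem norm_sub_sq_le_two_mul (x y : V) : ‖x - y‖ ^ 2 ≤ 2 * (‖x‖ ^ 2 + ‖y‖ ^ 2) := by
  linarith [parallelogram_law_with_norm ℝ x y, sq_nonneg ‖x + y‖]

theorem norm_add_sq_le_two_mul (x y : V) : ‖x + y‖ ^ 2 ≤ 2 * (‖x‖ ^ 2 + ‖y‖ ^ 2) := by
  linarith [parallelogram_law_with_norm ℝ x y, sq_nonneg ‖x - y‖]

theorem sum_norm_add_sq {ι : Type*} (s : Finset ι) (b : V) (e : ι → V) :
    ∑ i ∈ s, ‖b + e i‖ ^ 2 = #s * ‖b‖ ^ 2 + 2 * ⟪b, ∑ i ∈ s, e i⟫ + ∑ i ∈ s, ‖e i‖ ^ 2 := by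
  simp only [norm_add_sq_real, sum_add_distrib, sum_const, nsmul_eq_mul, inner_sum, mul_sum]

theorem sum_remainder_le_of_sum_eq_sub {ι : Type*} (T : Finset ι) {κ c : ℝ} (hκ : κ * #T = 1)
    (hc : 0 ≤ c) (u ab h D : V) (z : ι → V) (hz : ∑ i ∈ T, z i = D - h) :
    ∑ i ∈ T, (2 * c * ‖u + ab‖ ^ 2 + ‖u + ab + (z i - u + κ • h)‖ ^ 2 + ‖z i - u + κ • h‖ ^ 2)
      ≤ (4 * c + 4) * #T * (‖u‖ ^ 2 + ‖ab‖ ^ 2) + 4 / 3 * κ * ‖D‖ ^ 2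
        + 2 * ∑ i ∈ T, ‖z i‖ ^ 2 + 4 * κ * ‖h‖ ^ 2 := by
  have hκ0 : 0 < κ := pos_of_mul_pos_left (hκ ▸ one_pos) (Nat.cast_nonneg _)
  have hT : (0 : ℝ) < #T := pos_of_mul_pos_right (hκ ▸ one_pos) hκ0.le
  -- With `e i = z i + κ • h` the two middle terms are `‖ab + e i‖²` and `‖-u + e i‖²`,
  -- and the `e i` sum to `D`.
  have hsum_e : ∑ i ∈ T, (z i + κ • h) = D := by
    rw [sum_add_distrib, hz, sum_const, ← Nat.cast_smul_eq_nsmul ℝ, smul_smul, mul_comm, hκ,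
      one_smul, sub_add_cancel]
  have hab : ∑ i ∈ T, ‖u + ab + (z i - u + κ • h)‖ ^ 2
      = #T * ‖ab‖ ^ 2 + 2 * ⟪ab, D⟫ + ∑ i ∈ T, ‖z i + κ • h‖ ^ 2 := by
    rw [← hsum_e, ← sum_norm_add_sq]
    exact sum_congr rfl fun i _ => by congr 2; abel
  have hu : ∑ i ∈ T, ‖z i - u + κ • h‖ ^ 2
      = #T * ‖u‖ ^ 2 - 2 * ⟪u, D⟫ + ∑ i ∈ T, ‖z i + κ • h‖ ^ 2 := by
    have key := sum_norm_add_sq T (-u) (fun i => z i + κ • h)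
    rw [norm_neg, inner_neg_left, hsum_e] at key
    convert key using 1
    · exact sum_congr rfl fun i _ => by congr 2; abel
    · ring
  have he : ∑ i ∈ T, ‖z i + κ • h‖ ^ 2
      = ∑ i ∈ T, ‖z i‖ ^ 2 + 2 * κ * ⟪h, D⟫ - κ * ‖h‖ ^ 2 := by
    have := sum_norm_add_sq T (κ • h) z
    simp only [add_comm (κ • h)] at this
    rw [this, hz, norm_smul, real_inner_smul_left, inner_sub_right, real_inner_self_eq_norm_sq,
      Real.norm_eq_abs, mul_pow, sq_abs]
    linear_combination κ * ‖h‖ ^ 2 * hκ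
  have hyoung₁ : 2 * ⟪ab - u, D⟫ ≤ 3 * #T / 2 * ‖ab - u‖ ^ 2 + 2 * κ / 3 * ‖D‖ ^ 2 :=
    two_mul_inner_le_of_mul_eq_one (by positivity) (by linear_combination hκ) _ _
  have hyoung₂ : 2 * ⟪h, D⟫ ≤ 3 * ‖h‖ ^ 2 + 1 / 3 * ‖D‖ ^ 2 :=
    two_mul_inner_le_of_mul_eq_one (by norm_num) (by norm_num) _ _
  have hab_u := norm_sub_sq_le_two_mul ab u
  have hu_ab := norm_add_sq_le_two_mul u ab
  rw [sum_add_distrib, sum_add_distrib, sum_const, nsmul_eq_mul, hab, hu, he]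
  rw [inner_sub_left] at hyoung₁
  nlinarith [mul_le_mul_of_nonneg_left hyoung₂ hκ0.le, mul_le_mul_of_nonneg_left hu_ab
    (by positivity : (0 : ℝ) ≤ 2 * c * #T), mul_le_mul_of_nonneg_left hab_u
    (by positivity : (0 : ℝ) ≤ 3 * #T / 2)]

end InnerProductSpace

theorem le_add_inner_add_of_lipschitz_gradient {V : Type*} [NormedAddCommGroup V]
    [InnerProductSpace ℝ V] [CompleteSpace V] {F : V → ℝ} {G : V → V} {L : ℝ}
    (hF : ∀ x, HasGradientAt F (G x) x) (hG : ∀ x y, ‖G x - G y‖ ≤ L * ‖x - y‖) (x x' : V) :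
    F x' ≤ F x + ⟪G x, x' - x⟫ + L / 2 * ‖x' - x‖ ^ 2 := by
  set δ := x' - x
  let φ : ℝ → ℝ := fun t => F (x + t • δ) - t * ⟪G x, δ⟫ - L / 2 * ‖δ‖ ^ 2 * t ^ 2
  have hφ : ∀ t, HasDerivAt φ (⟪G (x + t • δ) - G x, δ⟫ - L * ‖δ‖ ^ 2 * t) t := by
    intro t
    have hline : HasDerivAt (fun s : ℝ => x + s • δ) δ t := by
      simpa using ((hasDerivAt_id t).smul_const δ).const_add x
    have hFline : HasDerivAt (fun s : ℝ => F (x + s • δ)) ⟪G (x + t • δ), δ⟫ t := by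
      simpa [Function.comp_def] using
        (hasGradientAt_iff_hasFDerivAt.mp (hF _)).comp_hasDerivAt t hline
    refine ((hFline.sub ((hasDerivAt_id t).mul_const ⟪G x, δ⟫)).sub
      ((hasDerivAt_pow 2 t).const_mul (L / 2 * ‖δ‖ ^ 2))).congr_deriv ?_
    rw [inner_sub_left]
    ring
  have hφ' : ∀ t ∈ interior (Set.Ici (0 : ℝ)), ⟪G (x + t • δ) - G x, δ⟫ - L * ‖δ‖ ^ 2 * t ≤ 0 := by
    intro t ht
    rw [interior_Ici, Set.mem_Ioi] at ht
    have hstep : ‖G (x + t • δ) - G x‖ ≤ L * (t * ‖δ‖) := by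
      simpa [norm_smul, abs_of_pos ht] using hG (x + t • δ) x
    nlinarith [real_inner_le_norm (G (x + t • δ) - G x) δ, norm_nonneg δ]
  have hanti : AntitoneOn φ (Set.Ici 0) :=
    antitoneOn_of_hasDerivWithinAt_nonpos (convex_Ici 0)
      (fun t _ => (hφ t).continuousAt.continuousWithinAt)
      (fun t _ => (hφ t).hasDerivWithinAt) hφ'
  have h := hanti (Set.mem_Ici.mpr le_rfl) (Set.mem_Ici.mpr zero_le_one) zero_le_one
  norm_num [φ, δ] at h
  linarith

theorem HasGradientAt.const_mul_sum {V ι : Type*} [NormedAddCommGroup V] [InnerProductSpace ℝ V]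
    [CompleteSpace V] [Fintype ι] {f : ι → V → ℝ} {f' : ι → V} {x : V} (c : ℝ)
    (h : ∀ i, HasGradientAt (f i) (f' i) x) :
    HasGradientAt (fun y => c * ∑ i, f i y) (c • ∑ i, f' i) x := by
  rw [hasGradientAt_iff_hasFDerivAt, map_smul, map_sum]
  exact (HasFDerivAt.fun_sum fun i _ => hasGradientAt_iff_hasFDerivAt.mp (h i)).const_mul c

theorem Fintype.sum_update_eq_add_sub {ι M : Type*} [Fintype ι] [DecidableEq ι] [AddCommGroup M]
    (f : ι → M) (a : ι) (b : M) : ∑ i, Function.update f a b i = ∑ i, f i + (b - f a) := by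
  rw [Finset.sum_update_of_mem (mem_univ a), ← Finset.add_sum_erase _ _ (mem_univ a),
    Finset.sdiff_singleton_eq_erase]
  abel

theorem Finset.sum_comp_eq_nsmul_sum {ι κ M : Type*} [Fintype ι] [Fintype κ] [DecidableEq κ]
    [AddCommMonoid M] {J : ι → κ} {k : ℕ} (hJ : ∀ j, #(univ.filter fun i => J i = j) = k)
    (F : κ → M) : ∑ i, F (J i) = k • ∑ j, F j := by
  rw [← sum_fiberwise' univ J F, smul_sum]
  simp_rw [sum_const, hJ]

namespace AdsagaState

variable {d n m : ℕ} (f : Fin n → EuclideanSpace ℝ (Fin d) → ℝ)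
  (gradf : Fin n → EuclideanSpace ℝ (Fin d) → EuclideanSpace ℝ (Fin d))
  (xstar : EuclideanSpace ℝ (Fin d)) (p : Fin m → ℝ) (pmin η : ℝ) (S : AdsagaState d n m)
  {J : Fin n → Fin m} {j : Fin m} {k : ℕ}

/-- `β⁺_j` after a step with choice `(j, i)`. -/
def storedGrad (j : Fin m) (i : Fin n) : EuclideanSpace ℝ (Fin d) :=
  if i = S.idx j then S.g j else S.alpha i

noncomputable def vStepDir (j : Fin m) (i : Fin n) : EuclideanSpace ℝ (Fin d) :=
  gradf i S.x - S.storedGrad j i - S.u j + ((m : ℝ) / n) • S.hvec j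

theorem step_x (j : Fin m) (i : Fin n) :
    (S.step gradf p pmin η j i).x = S.x - (η * (pmin / p j)) • (S.u j + S.abar) := by
  rw [← mul_div_assoc]
  rfl

theorem step_v (i : Fin n) (hinv : S.alpha (S.idx j) = S.beta j) :
    (S.step gradf p pmin η j i).v = S.v + (pmin / p j) • S.vStepDir gradf j i := by
  simp only [step, v, abar, Fintype.sum_update_eq_add_sub, hinv, vStepDir, storedGrad, hvec]
  module

theorem phi12_sub_le_of_move {Lf : ℝ}
    (hgrad : ∀ i x, HasGradientAt (f i) (gradf i x) x)
    (hFsmooth : ∀ x y : EuclideanSpace ℝ (Fin d),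
      ‖((1 : ℝ) / n) • (∑ i, gradf i x) - ((1 : ℝ) / n) • (∑ i, gradf i y)‖ ≤ Lf * ‖x - y‖)
    (hη : 0 ≤ η) {S S' : AdsagaState d n m} {q : ℝ} {a w : EuclideanSpace ℝ (Fin d)}
    (hx : S'.x = S.x - (η * q) • a) (hv : S'.v = S.v + q • w) :
    phi1 f xstar η S' + phi2 xstar η S' - (phi1 f xstar η S + phi2 xstar η S)
      ≤ q * (⟪(2 * η) • (η • S.v - (S.x - xstar) - (2 * m * η / n) • ∑ i, gradf i S.x), a⟫
          + ⟪(2 * η) • ((2 * η) • S.v - (S.x - xstar)), w⟫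
          + η ^ 2 * q * (2 * (m * Lf * η) * ‖a‖ ^ 2 + ‖a + w‖ ^ 2 + ‖w‖ ^ 2)) := by
  have hdescent := le_add_inner_add_of_lipschitz_gradient
    (fun x => HasGradientAt.const_mul_sum ((1 : ℝ) / n) (fun i => hgrad i x)) hFsmooth S.x S'.x
  have hdx : S'.x - S.x = -((η * q) • a) := by rw [hx]; abel
  rw [hdx, inner_neg_right, norm_neg, real_inner_smul_right, norm_smul, Real.norm_eq_abs,
    mul_pow, sq_abs] at hdescent
  have h4mη : 0 ≤ 4 * (m : ℝ) * η := by positivity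
  have hphi1 := mul_le_mul_of_nonneg_left hdescent h4mη
  simp only [phi1, phi2, hx, hv, sub_right_comm S.x _ xstar] at hphi1 ⊢
  simp only [norm_sub_sq_real, norm_add_sq_real, inner_sub_left, inner_sub_right,
    inner_add_right, real_inner_smul_left, real_inner_smul_right, sum_inner,
    norm_smul, Real.norm_eq_abs, mul_pow, sq_abs, real_inner_comm S.v (S.x - xstar),
    real_inner_comm a S.v] at hphi1 ⊢
  linear_combination hphi1

theorem sum_fiber_storedGrad (hidx : J (S.idx j) = j) (hinv : S.alpha (S.idx j) = S.beta j) :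
    ∑ i ∈ univ.filter (fun i => J i = j), S.storedGrad j i
      = ∑ i ∈ univ.filter (fun i => J i = j), S.alpha i + S.hvec j := by
  have hpoint : ∀ i, S.storedGrad j i = S.alpha i + if i = S.idx j then S.hvec j else 0 := by
    intro i
    by_cases hi : i = S.idx j
    · rw [storedGrad, if_pos hi, if_pos hi, hi, hinv, hvec, add_sub_cancel]
    · rw [storedGrad, if_neg hi, if_neg hi, add_zero]
  rw [sum_congr rfl fun i _ => hpoint i, sum_add_distrib, sum_ite_eq', if_pos (by simpa)]

theorem sum_fiber_grad_sub_storedGrad (hidx : J (S.idx j) = j)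
    (hinv : S.alpha (S.idx j) = S.beta j) :
    ∑ i ∈ univ.filter (fun i => J i = j), (gradf i S.x - S.storedGrad j i)
      = ∑ i ∈ univ.filter (fun i => J i = j), (gradf i S.x - S.alpha i) - S.hvec j := by
  rw [sum_sub_distrib, sum_sub_distrib, S.sum_fiber_storedGrad hidx hinv, sub_add_eq_sub_sub]

theorem sum_fiber_storedGrad_sub_sq_le (hidx : J (S.idx j) = j) :
    ∑ i ∈ univ.filter (fun i => J i = j), ‖S.storedGrad j i - gradf i xstar‖ ^ 2
      ≤ ∑ i ∈ univ.filter (fun i => J i = j), ‖S.alpha i - gradf i xstar‖ ^ 2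
        + ‖S.g j - gradf (S.idx j) xstar‖ ^ 2 := by
  have hpoint : ∀ i, ‖S.storedGrad j i - gradf i xstar‖ ^ 2 ≤ ‖S.alpha i - gradf i xstar‖ ^ 2
      + if i = S.idx j then ‖S.g j - gradf (S.idx j) xstar‖ ^ 2 else 0 := by
    intro i
    by_cases hi : i = S.idx j
    · rw [storedGrad, if_pos hi, if_pos hi, hi]
      exact le_add_of_nonneg_left (sq_nonneg _)
    · rw [storedGrad, if_neg hi, if_neg hi, add_zero]
  refine (sum_le_sum fun i _ => hpoint i).trans_eq ?_
  rw [sum_add_distrib, sum_ite_eq', if_pos (by simpa)]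

theorem sum_fiber_grad_sub_storedGrad_sq_le (hidx : J (S.idx j) = j) :
    ∑ i ∈ univ.filter (fun i => J i = j), ‖gradf i S.x - S.storedGrad j i‖ ^ 2
      ≤ 2 * ∑ i ∈ univ.filter (fun i => J i = j), ‖gradf i S.x - gradf i xstar‖ ^ 2
        + 2 * (∑ i ∈ univ.filter (fun i => J i = j), ‖S.alpha i - gradf i xstar‖ ^ 2
          + ‖S.g j - gradf (S.idx j) xstar‖ ^ 2) :=
  calc ∑ i ∈ univ.filter (fun i => J i = j), ‖gradf i S.x - S.storedGrad j i‖ ^ 2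
      ≤ ∑ i ∈ univ.filter (fun i => J i = j), 2 * (‖gradf i S.x - gradf i xstar‖ ^ 2
          + ‖S.storedGrad j i - gradf i xstar‖ ^ 2) := sum_le_sum fun i _ => by
        simpa using norm_sub_sq_le_two_mul (gradf i S.x - gradf i xstar)
          (S.storedGrad j i - gradf i xstar)
    _ ≤ _ := by
        rw [← mul_sum, sum_add_distrib, mul_add]
        gcongr
        exact S.sum_fiber_storedGrad_sub_sq_le gradf xstar hidx

theorem sum_fiber_remainder_le (hidx : J (S.idx j) = j) (hinv : S.alpha (S.idx j) = S.beta j)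
    {c : ℝ} (hc : 0 ≤ c) (hκ : (m : ℝ) / n * #(univ.filter (fun i => J i = j)) = 1) :
    ∑ i ∈ univ.filter (fun i => J i = j), (2 * c * ‖S.u j + S.abar‖ ^ 2
        + ‖S.u j + S.abar + S.vStepDir gradf j i‖ ^ 2 + ‖S.vStepDir gradf j i‖ ^ 2)
      ≤ (4 * c + 4) * #(univ.filter (fun i => J i = j)) * (‖S.u j‖ ^ 2 + ‖S.abar‖ ^ 2)
        + 20 / 3 * ∑ i ∈ univ.filter (fun i => J i = j),
            (‖gradf i S.x - gradf i xstar‖ ^ 2 + ‖S.alpha i - gradf i xstar‖ ^ 2)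
        + 4 * ‖S.g j - gradf (S.idx j) xstar‖ ^ 2
        + 8 * ((m : ℝ) / n) * (‖S.g j - gradf (S.idx j) xstar‖ ^ 2
          + ‖S.beta j - gradf (S.idx j) xstar‖ ^ 2) := by
  simp only [vStepDir]
  set T := univ.filter (fun i => J i = j)
  set κ : ℝ := (m : ℝ) / n
  have hκ0 : 0 ≤ κ := by positivity
  have hmain := sum_remainder_le_of_sum_eq_sub T hκ hc (S.u j) S.abar (S.hvec j) _ _
    (S.sum_fiber_grad_sub_storedGrad gradf hidx hinv)
  have hD : κ * ‖∑ i ∈ T, (gradf i S.x - S.alpha i)‖ ^ 2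
      ≤ 2 * ∑ i ∈ T, (‖gradf i S.x - gradf i xstar‖ ^ 2 + ‖S.alpha i - gradf i xstar‖ ^ 2) := by
    calc κ * ‖∑ i ∈ T, (gradf i S.x - S.alpha i)‖ ^ 2
        ≤ κ * (#T * ∑ i ∈ T, ‖gradf i S.x - S.alpha i‖ ^ 2) :=
          mul_le_mul_of_nonneg_left (norm_sum_sq_le_card_mul _ _) hκ0
      _ = ∑ i ∈ T, ‖(gradf i S.x - gradf i xstar) - (S.alpha i - gradf i xstar)‖ ^ 2 := by
          simp only [sub_sub_sub_cancel_right]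
          rw [← mul_assoc, hκ, one_mul]
      _ ≤ _ := by
          rw [mul_sum]
          exact sum_le_sum fun i _ => norm_sub_sq_le_two_mul _ _
  have hz2 := S.sum_fiber_grad_sub_storedGrad_sq_le gradf xstar hidx
  have hh : ‖S.hvec j‖ ^ 2
      ≤ 2 * (‖S.g j - gradf (S.idx j) xstar‖ ^ 2 + ‖S.beta j - gradf (S.idx j) xstar‖ ^ 2) := by
    rw [hvec, ← sub_sub_sub_cancel_right (S.g j) (S.beta j) (gradf (S.idx j) xstar)]
    exact norm_sub_sq_le_two_mul _ _
  have hh' := mul_le_mul_of_nonneg_left hh hκ0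
  have hsplit := sum_add_distrib (s := T) (f := fun i => ‖gradf i S.x - gradf i xstar‖ ^ 2)
    (g := fun i => ‖S.alpha i - gradf i xstar‖ ^ 2)
  linarith

theorem sum_u_add_abar (hpart : ∀ j, #(univ.filter fun i => J i = j) = k) :
    ∑ i, (S.u (J i) + S.abar) = (k : ℝ) • S.v := by
  rw [sum_comp_eq_nsmul_sum hpart (fun j => S.u j + S.abar), sum_add_distrib, sum_const,
    card_univ, Fintype.card_fin, ← Nat.cast_smul_eq_nsmul ℝ, ← Nat.cast_smul_eq_nsmul ℝ m]
  rfl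

theorem sum_fiber_vStepDir (hidx : J (S.idx j) = j)
    (hinv : S.alpha (S.idx j) = S.beta j) (hpart : #(univ.filter fun i => J i = j) = k)
    (hκ : (m : ℝ) / n * k = 1) :
    ∑ i ∈ univ.filter (fun i => J i = j), S.vStepDir gradf j i
      = ∑ i ∈ univ.filter (fun i => J i = j), (gradf i S.x - S.alpha i) - (k : ℝ) • S.u j := by
  simp only [vStepDir]
  rw [sum_add_distrib, sum_sub_distrib, S.sum_fiber_grad_sub_storedGrad gradf hidx hinv,
    sum_const, sum_const, hpart, ← Nat.cast_smul_eq_nsmul ℝ, ← Nat.cast_smul_eq_nsmul ℝ,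
    smul_smul, mul_comm, hκ, one_smul]
  abel

theorem sum_vStepDir (hidx : ∀ j, J (S.idx j) = j) (hinv : ∀ j, S.alpha (S.idx j) = S.beta j)
    (hpart : ∀ j, #(univ.filter fun i => J i = j) = k) (hκ : (m : ℝ) / n * k = 1) :
    ∑ i, S.vStepDir gradf (J i) i = ∑ i, gradf i S.x - (k : ℝ) • S.v := by
  have hfiber : ∀ j, ∑ i ∈ univ.filter (fun i => J i = j), S.vStepDir gradf (J i) i
      = ∑ i ∈ univ.filter (fun i => J i = j), (gradf i S.x - S.alpha i) - (k : ℝ) • S.u j :=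
    fun j => (sum_congr rfl fun i hi => by rw [(mem_filter.mp hi).2]).trans
      (S.sum_fiber_vStepDir gradf (hidx j) (hinv j) (hpart j) hκ)
  rw [← sum_fiberwise univ J, sum_congr rfl fun j _ => hfiber j, sum_sub_distrib,
    sum_fiberwise univ J (fun i => gradf i S.x - S.alpha i), sum_sub_distrib, ← smul_sum]
  simp only [v, abar, smul_add, smul_smul]
  rw [show (k : ℝ) * (m * (1 / n)) = 1 by linear_combination hκ, one_smul]
  abel

theorem mul_norm_abar_sq_le (hstar : ∑ i, gradf i xstar = 0) :
    (m : ℝ) * ‖S.abar‖ ^ 2 ≤ (m : ℝ) / n * ∑ i, ‖S.alpha i - gradf i xstar‖ ^ 2 := by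
  have habar : S.abar = ((1 : ℝ) / n) • ∑ i, (S.alpha i - gradf i xstar) := by
    rw [sum_sub_distrib, hstar, sub_zero]
    rfl
  have hcs := norm_sum_sq_le_card_mul univ fun i => S.alpha i - gradf i xstar
  rw [card_univ, Fintype.card_fin] at hcs
  rw [habar, norm_smul, mul_pow, Real.norm_eq_abs, sq_abs, ← mul_one_div (m : ℝ), mul_assoc]
  refine mul_le_mul_of_nonneg_left ?_ (Nat.cast_nonneg m)
  calc (1 / (n : ℝ)) ^ 2 * ‖∑ i, (S.alpha i - gradf i xstar)‖ ^ 2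
      ≤ (1 / (n : ℝ)) ^ 2 * (n * ∑ i, ‖S.alpha i - gradf i xstar‖ ^ 2) := by gcongr
    _ = _ := by
      rcases eq_or_ne (n : ℝ) 0 with hn | hn
      · simp [hn]
      · field_simp

theorem sum_remainder_le (hidx : ∀ j, J (S.idx j) = j) (hinv : ∀ j, S.alpha (S.idx j) = S.beta j)
    (hpart : ∀ j, #(univ.filter fun i => J i = j) = k) (hκ : (m : ℝ) / n * k = 1)
    {c : ℝ} (hc : 0 ≤ c) :
    ∑ i, (2 * c * ‖S.u (J i) + S.abar‖ ^ 2
        + ‖S.u (J i) + S.abar + S.vStepDir gradf (J i) i‖ ^ 2 + ‖S.vStepDir gradf (J i) i‖ ^ 2)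
      ≤ (4 * c + 4) * k * (∑ j, ‖S.u j‖ ^ 2 + m * ‖S.abar‖ ^ 2)
        + 20 / 3 * (∑ i, ‖gradf i S.x - gradf i xstar‖ ^ 2 + ∑ i, ‖S.alpha i - gradf i xstar‖ ^ 2)
        + 4 * ∑ j, ‖S.g j - gradf (S.idx j) xstar‖ ^ 2
        + 8 * ((m : ℝ) / n) * (∑ j, ‖S.g j - gradf (S.idx j) xstar‖ ^ 2
          + ∑ j, ‖S.beta j - gradf (S.idx j) xstar‖ ^ 2) := by
  calc _ = ∑ j, ∑ i ∈ univ.filter (fun i => J i = j), (2 * c * ‖S.u j + S.abar‖ ^ 2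
        + ‖S.u j + S.abar + S.vStepDir gradf j i‖ ^ 2 + ‖S.vStepDir gradf j i‖ ^ 2) := by
        rw [← sum_fiberwise univ J]
        exact sum_congr rfl fun j _ => sum_congr rfl fun i hi => by rw [(mem_filter.mp hi).2]
    _ ≤ _ := sum_le_sum fun j _ =>
        S.sum_fiber_remainder_le gradf xstar (hidx j) (hinv j) hc (by rw [hpart j]; exact hκ)
    _ = _ := by
        simp only [hpart, sum_add_distrib, ← mul_sum, sum_fiberwise, sum_const, card_univ,
          Fintype.card_fin, nsmul_eq_mul]

theorem weighted_sum_remainder_le (hidx : ∀ j, J (S.idx j) = j)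
    (hinv : ∀ j, S.alpha (S.idx j) = S.beta j) (hpart : ∀ j, #(univ.filter fun i => J i = j) = k)
    (hκ : (m : ℝ) / n * k = 1) (hstar : ∑ i, gradf i xstar = 0) {c : ℝ} (hc : 0 ≤ c)
    {q : Fin m → ℝ} (hq1 : ∀ j, q j ≤ 1) :
    (m : ℝ) / n * ∑ i, q (J i) * (2 * c * ‖S.u (J i) + S.abar‖ ^ 2
        + ‖S.u (J i) + S.abar + S.vStepDir gradf (J i) i‖ ^ 2 + ‖S.vStepDir gradf (J i) i‖ ^ 2)
      ≤ (4 * c + 4) * ∑ j, ‖S.u j‖ ^ 2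
        + 16 * ((m : ℝ) / n) * ∑ j, ‖S.g j - gradf (S.idx j) xstar‖ ^ 2
        + 16 * ((m : ℝ) / n) * ∑ j, ‖S.beta j - gradf (S.idx j) xstar‖ ^ 2
        + (m : ℝ) / n * (4 * c + 16) * ∑ i, ‖S.alpha i - gradf i xstar‖ ^ 2
        + 8 * ((m : ℝ) / n) * ∑ i, ‖gradf i S.x - gradf i xstar‖ ^ 2 := by
  set κ : ℝ := (m : ℝ) / n
  have hκ0 : 0 ≤ κ := by positivity
  have hκ1 : κ ≤ 1 := by
    rcases k.eq_zero_or_pos with hk | hk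
    · simp [hk] at hκ
    · nlinarith [show (1 : ℝ) ≤ k by exact_mod_cast hk]
  have hdrop := sum_le_sum fun i (_ : i ∈ univ) => mul_le_of_le_one_left
    (by positivity : 0 ≤ 2 * c * ‖S.u (J i) + S.abar‖ ^ 2
      + ‖S.u (J i) + S.abar + S.vStepDir gradf (J i) i‖ ^ 2 + ‖S.vStepDir gradf (J i) i‖ ^ 2)
    (hq1 (J i))
  have hweighted := mul_le_mul_of_nonneg_left
    (hdrop.trans (S.sum_remainder_le gradf xstar hidx hinv hpart hκ hc)) hκ0
  have habar := mul_le_mul_of_nonneg_left (S.mul_norm_abar_sq_le gradf xstar hstar)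
    (by positivity : (0 : ℝ) ≤ 4 * c + 4)
  set U := ∑ j, ‖S.u j‖ ^ 2
  set gs := ∑ j, ‖S.g j - gradf (S.idx j) xstar‖ ^ 2
  set bs := ∑ j, ‖S.beta j - gradf (S.idx j) xstar‖ ^ 2
  have hGs : 0 ≤ κ * ∑ i, ‖gradf i S.x - gradf i xstar‖ ^ 2 := by positivity
  have hAs : 0 ≤ κ * ∑ i, ‖S.alpha i - gradf i xstar‖ ^ 2 := by positivity
  have hgs : κ * (κ * gs) ≤ κ * gs := mul_le_of_le_one_left (by positivity) hκ1
  have hbs : κ * (κ * bs) ≤ κ * bs := mul_le_of_le_one_left (by positivity) hκ1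
  have hgs0 : 0 ≤ κ * gs := by positivity
  have hbs0 : 0 ≤ κ * bs := by positivity
  have hk_term : κ * ((4 * c + 4) * k * (U + m * ‖S.abar‖ ^ 2))
      = (4 * c + 4) * (U + m * ‖S.abar‖ ^ 2) := by
    linear_combination (4 * c + 4) * (U + m * ‖S.abar‖ ^ 2) * hκ
  linarith

theorem mul_phi12_step_sub_le {Lf : ℝ} (hgrad : ∀ i x, HasGradientAt (f i) (gradf i x) x)
    (hFsmooth : ∀ x y : EuclideanSpace ℝ (Fin d),
      ‖((1 : ℝ) / n) • (∑ i, gradf i x) - ((1 : ℝ) / n) • (∑ i, gradf i y)‖ ≤ Lf * ‖x - y‖)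
    (hη : 0 ≤ η) (hp : 0 < p j) (hinv : S.alpha (S.idx j) = S.beta j) (i : Fin n) :
    p j * (phi1 f xstar η (S.step gradf p pmin η j i) + phi2 xstar η (S.step gradf p pmin η j i)
        - (phi1 f xstar η S + phi2 xstar η S))
      ≤ pmin * (⟪(2 * η) • (η • S.v - (S.x - xstar) - (2 * m * η / n) • ∑ i, gradf i S.x),
            S.u j + S.abar⟫
          + ⟪(2 * η) • ((2 * η) • S.v - (S.x - xstar)), S.vStepDir gradf j i⟫
          + η ^ 2 * (pmin / p j) * (2 * (m * Lf * η) * ‖S.u j + S.abar‖ ^ 2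
            + ‖S.u j + S.abar + S.vStepDir gradf j i‖ ^ 2 + ‖S.vStepDir gradf j i‖ ^ 2)) := by
  have h := phi12_sub_le_of_move f gradf xstar η hgrad hFsmooth hη
    (S.step_x gradf p pmin η j i) (S.step_v gradf p pmin η i hinv)
  refine (mul_le_mul_of_nonneg_left h hp.le).trans_eq ?_
  rw [← mul_assoc, mul_div_cancel₀ _ hp.ne']

theorem expected_phi12_sub_le {Lf : ℝ} (hgrad : ∀ i x, HasGradientAt (f i) (gradf i x) x)
    (hFsmooth : ∀ x y : EuclideanSpace ℝ (Fin d),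
      ‖((1 : ℝ) / n) • (∑ i, gradf i x) - ((1 : ℝ) / n) • (∑ i, gradf i y)‖ ≤ Lf * ‖x - y‖)
    (hη : 0 ≤ η) (hp : ∀ j, 0 < p j) (hpsum : ∑ j, p j = 1)
    (hidx : ∀ j, J (S.idx j) = j) (hinv : ∀ j, S.alpha (S.idx j) = S.beta j)
    (hpart : ∀ j, #(univ.filter fun i => J i = j) = k) (hκ : (m : ℝ) / n * k = 1) :
    (∑ i, p (J i) * ((m : ℝ) / n) * (phi1 f xstar η (S.step gradf p pmin η (J i) i)
        + phi2 xstar η (S.step gradf p pmin η (J i) i)))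
        - (phi1 f xstar η S + phi2 xstar η S)
      ≤ -2 * pmin * η ^ 2 * ‖S.v‖ ^ 2
        - (2 * η * m * pmin / n) * ⟪S.x - xstar, ∑ i, gradf i S.x⟫
        + pmin * η ^ 2 * ((m : ℝ) / n * ∑ i, pmin / p (J i) *
          (2 * (m * Lf * η) * ‖S.u (J i) + S.abar‖ ^ 2
            + ‖S.u (J i) + S.abar + S.vStepDir gradf (J i) i‖ ^ 2
            + ‖S.vStepDir gradf (J i) i‖ ^ 2)) := by
  set κ : ℝ := (m : ℝ) / n
  set φ : AdsagaState d n m → ℝ := fun S' => phi1 f xstar η S' + phi2 xstar η S'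
  set y := S.x - xstar
  set G := ∑ i, gradf i S.x
  set P := (2 * η) • (η • S.v - y - (2 * m * η / n) • G)
  set Q := (2 * η) • ((2 * η) • S.v - y)
  set T : Fin n → ℝ := fun i => 2 * (m * Lf * η) * ‖S.u (J i) + S.abar‖ ^ 2
    + ‖S.u (J i) + S.abar + S.vStepDir gradf (J i) i‖ ^ 2 + ‖S.vStepDir gradf (J i) i‖ ^ 2
  have hweights : ∑ i, p (J i) * κ = 1 := by
    rw [sum_comp_eq_nsmul_sum hpart (fun j => p j * κ), ← sum_mul, hpsum, nsmul_eq_mul, one_mul,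
      mul_comm, hκ]
  have hstep := fun i => S.mul_phi12_step_sub_le f gradf xstar p pmin η hgrad hFsmooth hη
    (hp (J i)) (hinv (J i)) i
  have hsum_a := S.sum_u_add_abar hpart
  have hsum_w := S.sum_vStepDir gradf hidx hinv hpart hκ
  calc (∑ i, p (J i) * κ * φ (S.step gradf p pmin η (J i) i)) - φ S
      = ∑ i, κ * (p (J i) * (φ (S.step gradf p pmin η (J i) i) - φ S)) := by
        have h : ∑ i, κ * (p (J i) * (φ (S.step gradf p pmin η (J i) i) - φ S))
            = ∑ i, p (J i) * κ * φ (S.step gradf p pmin η (J i) i) - (∑ i, p (J i) * κ) * φ S := by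
          rw [sum_mul, ← sum_sub_distrib]
          exact sum_congr rfl fun i _ => by ring
        rw [h, hweights, one_mul]
    _ ≤ ∑ i, κ * (pmin * (⟪P, S.u (J i) + S.abar⟫ + ⟪Q, S.vStepDir gradf (J i) i⟫
          + η ^ 2 * (pmin / p (J i)) * T i)) :=
        sum_le_sum fun i _ => mul_le_mul_of_nonneg_left (hstep i) (by positivity)
    _ = pmin * (⟪P, κ • ∑ i, (S.u (J i) + S.abar)⟫ + ⟪Q, κ • ∑ i, S.vStepDir gradf (J i) i⟫)
          + pmin * η ^ 2 * (κ * ∑ i, pmin / p (J i) * T i) := by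
        simp only [real_inner_smul_right, inner_sum, mul_sum, ← sum_add_distrib]
        exact sum_congr rfl fun i _ => by ring
    _ = _ := by
        rw [hsum_a, hsum_w, smul_smul, hκ, one_smul, smul_sub, smul_smul, hκ, one_smul]
        simp only [P, Q, G, inner_sub_left, inner_sub_right, real_inner_smul_left,
          real_inner_smul_right, real_inner_self_eq_norm_sq, real_inner_comm S.v, κ]
        ring

end AdsagaState

theorem adsaga_phi12_decrease_general
    {d n m : ℕ} (hn : 0 < n)
    (Lf : ℝ) (hLf : 0 < Lf)
    (f : Fin n → EuclideanSpace ℝ (Fin d) → ℝ)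
    (gradf : Fin n → EuclideanSpace ℝ (Fin d) → EuclideanSpace ℝ (Fin d))
    (hgrad : ∀ i x, HasGradientAt (f i) (gradf i x) x)
    (hFsmooth : ∀ x y : EuclideanSpace ℝ (Fin d),
      ‖((1 : ℝ) / n) • (∑ i, gradf i x) - ((1 : ℝ) / n) • (∑ i, gradf i y)‖ ≤ Lf * ‖x - y‖)
    (xstar : EuclideanSpace ℝ (Fin d))
    (hstarzero : (∑ i, gradf i xstar) = 0)
    (J : Fin n → Fin m)
    (hpart : ∀ j, (Finset.univ.filter (fun i => J i = j)).card = n / m)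
    (p : Fin m → ℝ) (hp : ∀ j, 0 < p j) (hpsum : (∑ j, p j) = 1)
    (pmin : ℝ)
    (hpmin : IsLeast (Set.range p) pmin)
    (η : ℝ) (hη : 0 < η)
    (S : AdsagaState d n m)
    (hidx : ∀ j, J (S.idx j) = j)
    (hinv : ∀ j, S.alpha (S.idx j) = S.beta j)
    :
    (∑ i : Fin n, p (J i) * ((m : ℝ) / n) *
        (phi1 f xstar η (AdsagaState.step gradf p pmin η S (J i) i) + phi2 xstar η (AdsagaState.step gradf p pmin η S (J i) i)))
        - (phi1 f xstar η S + phi2 xstar η S)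
      ≤ -2 * pmin * η ^ 2 * ‖S.v‖ ^ 2
        - (2 * η * (m : ℝ) * pmin / n) * ⟪S.x - xstar, ∑ i, gradf i S.x⟫
        + η ^ 2 * pmin * (4 * (m : ℝ) * Lf * η + 4) * (∑ j, ‖S.u j‖ ^ 2)
        + (16 * (m : ℝ) * pmin * η ^ 2 / n) * (∑ j, ‖S.g j - gradf (S.idx j) xstar‖ ^ 2)
        + (16 * (m : ℝ) * pmin * η ^ 2 / n) * (∑ j, ‖S.beta j - gradf (S.idx j) xstar‖ ^ 2)
        + (η ^ 2 * (m : ℝ) * pmin / n) * (4 * (m : ℝ) * η * Lf + 16) *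
            (∑ i, ‖S.alpha i - gradf i xstar‖ ^ 2)
        + (8 * (m : ℝ) * pmin * η ^ 2 / n) * (∑ i, ‖gradf i S.x - gradf i xstar‖ ^ 2) := by
  have hcard := sum_comp_eq_nsmul_sum hpart fun _ => (1 : ℕ)
  simp only [sum_const, card_univ, Fintype.card_fin, smul_eq_mul, mul_one] at hcard
  have hκ : (m : ℝ) / n * (n / m : ℕ) = 1 := by
    rw [div_mul_eq_mul_div, mul_comm, ← Nat.cast_mul, ← hcard, div_self (by positivity)]
  obtain ⟨⟨j₀, rfl⟩, hpmin_le⟩ := hpmin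
  have hq1 : ∀ j, p j₀ / p j ≤ 1 := fun j => div_le_one_of_le₀ (hpmin_le ⟨j, rfl⟩) (hp j).le
  have hexp := S.expected_phi12_sub_le f gradf xstar p (p j₀) η hgrad hFsmooth hη.le hp hpsum
    hidx hinv hpart hκ
  have hrem := mul_le_mul_of_nonneg_left
    (S.weighted_sum_remainder_le gradf xstar hidx hinv hpart hκ hstarzero
      (by positivity : 0 ≤ m * Lf * η) hq1)
    (by have := hp j₀; positivity : 0 ≤ p j₀ * η ^ 2)
  linear_combination hexp + hrem

theorem adsaga_phi12_decrease
    {d n m : ℕ} (hd : 0 < d) (hn : 0 < n) (hm : 0 < m) (hmn : m ∣ n)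
    (L Lf μ : ℝ) (hL : 0 < L) (hLf : 0 < Lf) (hμ : 0 < μ)
    (f : Fin n → EuclideanSpace ℝ (Fin d) → ℝ)
    (gradf : Fin n → EuclideanSpace ℝ (Fin d) → EuclideanSpace ℝ (Fin d))
    (hgrad : ∀ i x, HasGradientAt (f i) (gradf i x) x)
    (hconv : ∀ i, ConvexOn ℝ Set.univ (f i))
    (hsmooth : ∀ i (x y : EuclideanSpace ℝ (Fin d)), ‖gradf i x - gradf i y‖ ≤ L * ‖x - y‖)
    (hFsmooth : ∀ x y : EuclideanSpace ℝ (Fin d),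
      ‖((1 : ℝ) / n) • (∑ i, gradf i x) - ((1 : ℝ) / n) • (∑ i, gradf i y)‖ ≤ Lf * ‖x - y‖)
    (hFstrong : ∀ x y : EuclideanSpace ℝ (Fin d),
      μ * ‖x - y‖ ^ 2 ≤
        ⟪((1 : ℝ) / n) • (∑ i, gradf i x) - ((1 : ℝ) / n) • (∑ i, gradf i y), x - y⟫)
    (xstar : EuclideanSpace ℝ (Fin d))
    (hmin : ∀ x : EuclideanSpace ℝ (Fin d),
      (((1 : ℝ) / n) * ∑ i, f i xstar) ≤ ((1 : ℝ) / n) * ∑ i, f i x)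
    (hstarzero : (∑ i, gradf i xstar) = 0)
    (J : Fin n → Fin m)
    (hpart : ∀ j, (Finset.univ.filter (fun i => J i = j)).card = n / m)
    (p : Fin m → ℝ) (hp : ∀ j, 0 < p j) (hpsum : (∑ j, p j) = 1)
    (pmin pmax : ℝ)
    (hpmin : IsLeast (Set.range p) pmin) (hpmax : IsGreatest (Set.range p) pmax)
    (η : ℝ) (hη : 0 < η)
    (S : AdsagaState d n m)
    (hidx : ∀ j, J (S.idx j) = j)
    (hinv : ∀ j, S.alpha (S.idx j) = S.beta j)
    :
    (∑ i : Fin n, p (J i) * ((m : ℝ) / n) *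
        (phi1 f xstar η (AdsagaState.step gradf p pmin η S (J i) i) + phi2 xstar η (AdsagaState.step gradf p pmin η S (J i) i)))
        - (phi1 f xstar η S + phi2 xstar η S)
      ≤ -2 * pmin * η ^ 2 * ‖S.v‖ ^ 2
        - (2 * η * (m : ℝ) * pmin / n) * ⟪S.x - xstar, ∑ i, gradf i S.x⟫
        + η ^ 2 * pmin * (4 * (m : ℝ) * Lf * η + 4) * (∑ j, ‖S.u j‖ ^ 2)
        + (16 * (m : ℝ) * pmin * η ^ 2 / n) * (∑ j, ‖S.g j - gradf (S.idx j) xstar‖ ^ 2)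
        + (16 * (m : ℝ) * pmin * η ^ 2 / n) * (∑ j, ‖S.beta j - gradf (S.idx j) xstar‖ ^ 2)
        + (η ^ 2 * (m : ℝ) * pmin / n) * (4 * (m : ℝ) * η * Lf + 16) *
            (∑ i, ‖S.alpha i - gradf i xstar‖ ^ 2)
        + (8 * (m : ℝ) * pmin * η ^ 2 / n) * (∑ i, ‖gradf i S.x - gradf i xstar‖ ^ 2) :=
  adsaga_phi12_decrease_general hn Lf hLf f gradf hgrad hFsmooth xstar hstarzero J hpart p hp hpsum
    pmin hpmin η hη S hidx hinv
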